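/- Let κ be a field of characteristic 2. The κ-algebra homomorphism κ[[a,b,c]]/(a² − cb⁴) → κ[[u,v]] given by a ↦ u²v, b ↦ u, c ↦ v² is injective with image the subring κ[[u, u²v, v²]], and a power series f ∈ κ[[u,v]] lies in κ[[u,u²v,v²]] if and only if its image in κ[[u,v]]/(u²) lies in the subring κ[[u,v²]]/(u²). -/

import Mathlib

noncomputable section

/-- The effect of the substitution `a ↦ u²v, b ↦ u, c ↦ v²` on exponent vectors. -/
def expMap9 (d : Fin 3 →₀ ℕ) : Fin 2 →₀ ℕ :=
  d 0 • (Finsupp.single 0 2 + Finsupp.single 1 1) + d 1 • Finsupp.single 0 1 +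
    d 2 • Finsupp.single 1 2

/-- `φ : κ[[a,b,c]] → κ[[u,v]]` is the substitution homomorphism `a ↦ u²v`, `b ↦ u`, `c ↦ v²`
precisely when its coefficients are given by the evident formula. -/
def IsSubstHom9 (κ : Type*) [Field κ]
    (φ : MvPowerSeries (Fin 3) κ →ₐ[κ] MvPowerSeries (Fin 2) κ) : Prop :=
  ∀ (f : MvPowerSeries (Fin 3) κ) (e : Fin 2 →₀ ℕ),
    MvPowerSeries.coeff e (φ f) =
      ∑ᶠ d : Fin 3 →₀ ℕ, if expMap9 d = e then MvPowerSeries.coeff d f else 0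

/-- The complete monomial subring `κ[[u, u²v, v²]] ⊆ κ[[u,v]]`. -/
def monomialSubring9 (κ : Type*) [Field κ] : Set (MvPowerSeries (Fin 2) κ) :=
  {f | ∀ d : Fin 2 →₀ ℕ, MvPowerSeries.coeff d f ≠ 0 →
    d ∈ AddSubmonoid.closure ({Finsupp.single 0 1, Finsupp.single 0 2 + Finsupp.single 1 1,
      Finsupp.single 1 2} : Set (Fin 2 →₀ ℕ))}

/-- The subring `κ[[u, v²]] ⊆ κ[[u,v]]`: power series all of whose monomials have even
`v`-exponent. -/
def uAndVSquared (κ : Type*) [Field κ] : Set (MvPowerSeries (Fin 2) κ) :=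
  {g | ∀ d : Fin 2 →₀ ℕ, MvPowerSeries.coeff d g ≠ 0 → Even (d 1)}

/-! The substitution acts on exponents by `expMap9`, which is injective on exponents of
`a`-degree `< 2`; its image, the exponent monoid of `κ[[u, u²v, v²]]`, consists of the `(i, j)`
with `j` even or `i ≥ 2`. So series of `a`-degree `< 2` map isomorphically onto the monomial
subring, and every series is congruent modulo `a² − cb⁴` to one of them: rewrite `a² ↦ cb⁴`,
both sides having image `u⁴v²`. This gives the kernel and the range. The cartesian square is the
exponent description read coefficientwise: a monomial of odd `v`-degree must be divisible
by `u²`. -/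

namespace SubstHom9

open MvPowerSeries Finsupp

lemma expMap9_apply_zero (d : Fin 3 →₀ ℕ) : expMap9 d 0 = 2 * d 0 + d 1 := by
  simp [expMap9]; ring

lemma expMap9_apply_one (d : Fin 3 →₀ ℕ) : expMap9 d 1 = d 0 + 2 * d 2 := by
  simp [expMap9]; ring

lemma expMap9_injOn : Set.InjOn expMap9 {d | d 0 < 2} := by
  intro d hd d' hd' h
  have h0 := congr($h 0)
  have h1 := congr($h 1)
  simp only [Set.mem_ofPred_eq, expMap9_apply_zero, expMap9_apply_one] at hd hd' h0 h1
  ext i; fin_cases i <;> simp <;> omega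

abbrev expMonoid : AddSubmonoid (Fin 2 →₀ ℕ) :=
  AddSubmonoid.closure {single 0 1, single 0 2 + single 1 1, single 1 2}

lemma expMap9_mem_expMonoid (d : Fin 3 →₀ ℕ) : expMap9 d ∈ expMonoid := by
  refine add_mem (add_mem (nsmul_mem ?_ _) (nsmul_mem ?_ _)) (nsmul_mem ?_ _) <;>
    exact AddSubmonoid.subset_closure (by simp)

lemma exists_expMap9_eq {e : Fin 2 →₀ ℕ} (he : Even (e 1) ∨ 2 ≤ e 0) :
    ∃ d : Fin 3 →₀ ℕ, d 0 < 2 ∧ expMap9 d = e := by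
  refine ⟨single 0 (e 1 % 2) + single 1 (e 0 - 2 * (e 1 % 2)) + single 2 (e 1 / 2), ?_, ?_⟩
  · simp; omega
  · rw [Nat.even_iff] at he
    ext i; fin_cases i <;> simp [expMap9_apply_zero, expMap9_apply_one] <;> omega

lemma mem_expMonoid_iff {e : Fin 2 →₀ ℕ} : e ∈ expMonoid ↔ Even (e 1) ∨ 2 ≤ e 0 := by
  refine ⟨fun he => ?_, fun he => ?_⟩
  · induction he using AddSubmonoid.closure_induction with
    | mem x hx =>
      rcases hx with rfl | rfl | rfl <;> simp
    | zero => simp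
    | add x y _ _ hx hy =>
      simp only [Finsupp.add_apply, Nat.even_iff] at hx hy ⊢
      omega
  · obtain ⟨d, -, rfl⟩ := exists_expMap9_eq he
    exact expMap9_mem_expMonoid d

section Division

variable {R : Type*} [CommRing R]

def expA2 : Fin 3 →₀ ℕ := single 0 2

def expCB4 : Fin 3 →₀ ℕ := single 2 1 + single 1 4

lemma X_sq_sub_eq_monomial_sub : (X 0 : MvPowerSeries (Fin 3) R) ^ 2 - X 2 * X 1 ^ 4 =
    monomial expA2 1 - monomial expCB4 1 := by
  rw [X_pow_eq, X_pow_eq, X_def, monomial_mul_monomial, one_mul, expA2, expCB4]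

lemma expMap9_expA2_eq : expMap9 expA2 = expMap9 expCB4 := by
  ext i; fin_cases i <;> simp [expMap9_apply_zero, expMap9_apply_one, expA2, expCB4]

lemma expCB4_le_iff {d : Fin 3 →₀ ℕ} : expCB4 ≤ d ↔ 4 ≤ d 1 ∧ 1 ≤ d 2 := by
  simp [Finsupp.le_def, Fin.forall_fin_succ, expCB4]

/-- The coefficient of `a^{d₀} b^{d₁} c^{d₂}` after rewriting `a² ↦ cb⁴` everywhere in `f`:
it collects the coefficients of `a^{d₀+2j} b^{d₁-4j} c^{d₂-j}`. -/
def reducedCoeff (f : MvPowerSeries (Fin 3) R) (d : Fin 3 →₀ ℕ) : R :=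
  ∑ j ∈ Finset.range (min (d 2) (d 1 / 4) + 1), coeff (d + j • expA2 - j • expCB4) f

lemma reducedCoeff_eq (f : MvPowerSeries (Fin 3) R) (d : Fin 3 →₀ ℕ) :
    reducedCoeff f d =
      coeff d f + if expCB4 ≤ d then reducedCoeff f (d - expCB4 + expA2) else 0 := by
  rw [reducedCoeff, Finset.sum_range_succ', zero_smul, zero_smul, add_zero, tsub_zero, add_comm]
  split_ifs with h
  · rw [expCB4_le_iff] at h
    have hlen : min (d 2) (d 1 / 4) =
        min ((d - expCB4 + expA2) 2) ((d - expCB4 + expA2) 1 / 4) + 1 := by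
      simp [expCB4, expA2]; omega
    rw [reducedCoeff, hlen]
    congr 1
    refine Finset.sum_congr rfl fun j _ => congr_arg (coeff · f) ?_
    ext i; fin_cases i <;> simp [expCB4, expA2] <;> omega
  · rw [expCB4_le_iff] at h
    have hlen : min (d 2) (d 1 / 4) = 0 := by omega
    simp [hlen]

/-- The quotient in the division of `f` by `a² - cb⁴` with remainder of `a`-degree below `2`. -/
def reducedQuot (f : MvPowerSeries (Fin 3) R) : MvPowerSeries (Fin 3) R :=
  fun c => reducedCoeff f (c + expA2)

lemma coeff_reducedQuot (f : MvPowerSeries (Fin 3) R) (c : Fin 3 →₀ ℕ) :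
    coeff c (reducedQuot f) = reducedCoeff f (c + expA2) := rfl

lemma coeff_sub_mul_reducedQuot_eq_zero (f : MvPowerSeries (Fin 3) R) {d : Fin 3 →₀ ℕ}
    (hd : 2 ≤ d 0) :
    coeff d (f - (monomial expA2 1 - monomial expCB4 1) * reducedQuot f) = 0 := by
  have hA : expA2 ≤ d := by simpa [Finsupp.le_def, Fin.forall_fin_succ, expA2] using hd
  rw [sub_mul, mul_comm, mul_comm (monomial _ _), map_sub, map_sub, coeff_mul_monomial,
    coeff_mul_monomial, if_pos hA, coeff_reducedQuot, tsub_add_cancel_of_le hA, mul_one,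
    reducedCoeff_eq f d]
  split_ifs <;> simp [coeff_reducedQuot]

end Division

section Substitution

variable {κ : Type*} [Field κ] {φ : MvPowerSeries (Fin 3) κ →ₐ[κ] MvPowerSeries (Fin 2) κ}

lemma mem_expMonoid_of_coeff_ne_zero (hφ : IsSubstHom9 κ φ) {F : MvPowerSeries (Fin 3) κ}
    {e : Fin 2 →₀ ℕ} (h : coeff e (φ F) ≠ 0) : e ∈ expMonoid := by
  contrapose! h
  rw [hφ]
  refine finsum_eq_zero_of_forall_eq_zero fun d => if_neg ?_
  rintro rfl
  exact h (expMap9_mem_expMonoid d)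

lemma coeff_expMap9_apply (hφ : IsSubstHom9 κ φ) {F : MvPowerSeries (Fin 3) κ}
    (hF : ∀ d, coeff d F ≠ 0 → d 0 < 2) {d : Fin 3 →₀ ℕ} (hd : d 0 < 2) :
    coeff (expMap9 d) (φ F) = coeff d F := by
  rw [hφ, finsum_eq_single _ d fun d' hd' => ite_eq_right_iff.2 fun h => ?_, if_pos rfl]
  by_contra hne
  exact hd' (expMap9_injOn (hF d' hne) hd h)

lemma apply_monomial_one (hφ : IsSubstHom9 κ φ) (d : Fin 3 →₀ ℕ) :
    φ (monomial d 1) = monomial (expMap9 d) 1 := by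
  ext e
  classical
  rw [hφ, finsum_eq_single _ d fun d' hd' => by simp [coeff_monomial, hd']]
  simp [coeff_monomial, eq_comm]

/-- The preimage of `f` supported on exponents of `a`-degree less than `2`. -/
def lowDegreeLift (f : MvPowerSeries (Fin 2) κ) : MvPowerSeries (Fin 3) κ :=
  fun d => if d 0 < 2 then coeff (expMap9 d) f else 0

lemma coeff_lowDegreeLift (f : MvPowerSeries (Fin 2) κ) (d : Fin 3 →₀ ℕ) :
    coeff d (lowDegreeLift f) = if d 0 < 2 then coeff (expMap9 d) f else 0 := rfl

lemma range_eq (hφ : IsSubstHom9 κ φ) : Set.range φ = monomialSubring9 κ := by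
  refine Set.Subset.antisymm ?_ fun f hf => ⟨lowDegreeLift f, ?_⟩
  · rintro _ ⟨F, rfl⟩ e he
    exact mem_expMonoid_of_coeff_ne_zero hφ he
  ext e
  by_cases he : e ∈ expMonoid
  · obtain ⟨d, hd, rfl⟩ := exists_expMap9_eq (mem_expMonoid_iff.1 he)
    have hlow : ∀ d', coeff d' (lowDegreeLift f) ≠ 0 → d' 0 < 2 :=
      fun d' hd' => by_contra fun h => hd' (if_neg h)
    rw [coeff_expMap9_apply hφ hlow hd, coeff_lowDegreeLift, if_pos hd]
  · rw [not_imp_comm.1 (mem_expMonoid_of_coeff_ne_zero hφ) he, not_imp_comm.1 (hf e) he]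

lemma ker_eq (hφ : IsSubstHom9 κ φ) :
    RingHom.ker φ.toRingHom = Ideal.span {X 0 ^ 2 - X 2 * X 1 ^ 4} := by
  rw [X_sq_sub_eq_monomial_sub]
  refine le_antisymm (fun f hf => ?_) ?_
  · set r := f - (monomial expA2 1 - monomial expCB4 1) * reducedQuot f with hr
    have hφr : φ r = 0 := by
      rw [hr, map_sub, map_mul, map_sub, apply_monomial_one hφ, apply_monomial_one hφ,
        expMap9_expA2_eq, sub_self, zero_mul, sub_zero]
      exact hf
    have hr0 : r = 0 := by
      ext d
      by_cases hd : 2 ≤ d 0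
      · exact coeff_sub_mul_reducedQuot_eq_zero f hd
      · have hlow : ∀ d, coeff d r ≠ 0 → d 0 < 2 := fun d h =>
          not_le.1 fun hd => h (coeff_sub_mul_reducedQuot_eq_zero f hd)
        rw [← coeff_expMap9_apply hφ hlow (not_le.1 hd), hφr, map_zero, map_zero]
    rw [sub_eq_zero, mul_comm] at hr0
    exact Ideal.mem_span_singleton'.2 ⟨reducedQuot f, hr0.symm⟩
  · rw [Ideal.span_le, Set.singleton_subset_iff, SetLike.mem_coe, RingHom.mem_ker]
    change φ _ = 0
    rw [map_sub, apply_monomial_one hφ, apply_monomial_one hφ, expMap9_expA2_eq, sub_self]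

end Substitution

section Cartesian

variable {κ : Type*} [Field κ]

def evenVPart (f : MvPowerSeries (Fin 2) κ) : MvPowerSeries (Fin 2) κ :=
  fun e => if Even (e 1) then coeff e f else 0

lemma coeff_evenVPart (f : MvPowerSeries (Fin 2) κ) (e : Fin 2 →₀ ℕ) :
    coeff e (evenVPart f) = if Even (e 1) then coeff e f else 0 := rfl

lemma evenVPart_mem_uAndVSquared (f : MvPowerSeries (Fin 2) κ) : evenVPart f ∈ uAndVSquared κ :=
  fun _ he => by_contra fun h => he (if_neg h)

lemma mem_monomialSubring9_iff (f : MvPowerSeries (Fin 2) κ) :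
    f ∈ monomialSubring9 κ ↔ ∃ g ∈ uAndVSquared κ, f - g ∈ Ideal.span {X 0 ^ 2} := by
  simp only [Ideal.mem_span_singleton, X_pow_dvd_iff, map_sub]
  constructor
  · refine fun hf => ⟨evenVPart f, evenVPart_mem_uAndVSquared f, fun e he => ?_⟩
    rw [coeff_evenVPart]
    split_ifs with hev
    · exact sub_self _
    · rw [sub_zero]
      by_contra hfe
      exact (mem_expMonoid_iff.1 (hf e hfe)).elim hev he.not_ge
  · rintro ⟨g, hg, hfg⟩ e he
    refine mem_expMonoid_iff.2 ?_
    by_cases hge : coeff e g = 0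
    · refine Or.inr (not_lt.1 fun hlt => he ?_)
      simpa [hge] using hfg e hlt
    · exact Or.inl (hg e hge)

end Cartesian

end SubstHom9

open SubstHom9 in
theorem substHom9_ker_range_cartesian_general (κ : Type*) [Field κ]
    (φ : MvPowerSeries (Fin 3) κ →ₐ[κ] MvPowerSeries (Fin 2) κ) (hφ : IsSubstHom9 κ φ) :
    RingHom.ker φ.toRingHom =
      Ideal.span {(MvPowerSeries.X 0) ^ 2 - MvPowerSeries.X 2 * (MvPowerSeries.X 1) ^ 4} ∧
    Set.range φ = monomialSubring9 κ ∧
    (∀ f : MvPowerSeries (Fin 2) κ, f ∈ monomialSubring9 κ ↔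
      ∃ g ∈ uAndVSquared κ,
        f - g ∈ Ideal.span {(MvPowerSeries.X 0 : MvPowerSeries (Fin 2) κ) ^ 2}) :=
  ⟨ker_eq hφ, range_eq hφ, mem_monomialSubring9_iff⟩

/-- Let `κ` be a field of characteristic `2`.  The `κ`-algebra homomorphism
`κ[[a,b,c]]/(a² − cb⁴) → κ[[u,v]]` given by `a ↦ u²v`, `b ↦ u`, `c ↦ v²` is injective
(the kernel of the substitution map is exactly `(a² − cb⁴)`), with image the subring
`κ[[u, u²v, v²]]`; and a power series `f` lies in `κ[[u, u²v, v²]]` if and only if its image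
in `κ[[u,v]]/(u²)` lies in the subring `κ[[u,v²]]/(u²)`. -/
theorem substHom9_ker_range_cartesian (κ : Type*) [Field κ] [CharP κ 2]
    (φ : MvPowerSeries (Fin 3) κ →ₐ[κ] MvPowerSeries (Fin 2) κ) (hφ : IsSubstHom9 κ φ) :
    RingHom.ker φ.toRingHom =
      Ideal.span {(MvPowerSeries.X 0) ^ 2 - MvPowerSeries.X 2 * (MvPowerSeries.X 1) ^ 4} ∧
    Set.range φ = monomialSubring9 κ ∧
    (∀ f : MvPowerSeries (Fin 2) κ, f ∈ monomialSubring9 κ ↔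
      ∃ g ∈ uAndVSquared κ,
        f - g ∈ Ideal.span {(MvPowerSeries.X 0 : MvPowerSeries (Fin 2) κ) ^ 2}) :=
  substHom9_ker_range_cartesian_general κ φ hφ
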